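/- arXiv:2506.06746 — 2 statements merged into one kernel-verified Lean document; each statement's English description precedes it below -/
import Mathlib

section
/- For any real numbers θ₁ and θ₂ with θ₂ > 0, we have 0 ≤ |θ₁| - θ₁·tanh(θ₁/θ₂) ≤ ε*·θ₂, where ε* is the unique positive constant satisfying ε* = e^{-(ε*+1)}. -/
/-!
Writing `t = θ₁ / θ₂`, the quantity is `θ₂ (|t| - t tanh t) = θ₂ · u / (eᵘ + 1)` with `u = 2|t|`,
which is visibly nonnegative. For the upper bound, `ε e^{ε+1} = 1` turns `ε eᵘ` into `e^{u-(ε+1)}`,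
and `e^{u-(ε+1)} ≥ u - ε` gives `u ≤ ε (eᵘ + 1)`.
-/

open Real

theorem Real.one_sub_tanh (t : ℝ) : 1 - tanh t = 2 / (exp (2 * t) + 1) := by
  have hexp : exp (2 * t) = exp t * exp t := by rw [← exp_add, two_mul]
  rw [tanh_eq, exp_neg, hexp]
  field_simp
  ring

theorem Real.abs_mul_tanh_abs (t : ℝ) : |t| * tanh |t| = t * tanh t := by
  rcases abs_cases t with ⟨ht, -⟩ | ⟨ht, -⟩ <;> simp [ht, tanh_neg]

theorem Real.abs_sub_mul_tanh (t : ℝ) : |t| - t * tanh t = 2 * |t| / (exp (2 * |t|) + 1) := by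
  rw [← abs_mul_tanh_abs, ← mul_one_sub, one_sub_tanh, mul_div_assoc', mul_comm]

theorem le_mul_exp_add_one_of_eq_exp {ε : ℝ} (hε : ε = exp (-(ε + 1))) (u : ℝ) :
    u ≤ ε * (exp u + 1) := by
  have hε_exp : ε * exp u = exp (u - (ε + 1)) := by
    nth_rewrite 1 [hε]
    rw [← exp_add, neg_add_eq_sub]
  have := add_one_le_exp (u - (ε + 1))
  linarith

theorem div_exp_add_one_le_of_eq_exp {ε : ℝ} (hε : ε = exp (-(ε + 1))) (u : ℝ) :
    u / (exp u + 1) ≤ ε :=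
  (div_le_iff₀ (by positivity)).2 (le_mul_exp_add_one_of_eq_exp hε u)

theorem stmt_0_general (θ₁ θ₂ : ℝ) (hθ₂ : θ₂ > 0) (εs : ℝ)
    (hεs : εs = Real.exp (-(εs + 1))) :
    0 ≤ |θ₁| - θ₁ * Real.tanh (θ₁ / θ₂) ∧
      |θ₁| - θ₁ * Real.tanh (θ₁ / θ₂) ≤ εs * θ₂ := by
  have hscale : |θ₁| - θ₁ * tanh (θ₁ / θ₂) =
      θ₂ * (2 * |θ₁ / θ₂| / (exp (2 * |θ₁ / θ₂|) + 1)) := by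
    rw [← abs_sub_mul_tanh, abs_div, abs_of_pos hθ₂]
    field_simp
  rw [hscale]
  constructor
  · positivity
  · rw [mul_comm εs]
    exact mul_le_mul_of_nonneg_left (div_exp_add_one_le_of_eq_exp hεs _) hθ₂.le

theorem stmt_0 (θ₁ θ₂ : ℝ) (hθ₂ : θ₂ > 0) (εs : ℝ) (hεs_pos : εs > 0)
    (hεs : εs = Real.exp (-(εs + 1))) :
    0 ≤ |θ₁| - θ₁ * Real.tanh (θ₁ / θ₂) ∧
      |θ₁| - θ₁ * Real.tanh (θ₁ / θ₂) ≤ εs * θ₂ :=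
  stmt_0_general θ₁ θ₂ hθ₂ εs hεs
end

section
/- Let w : [t_k, ∞) → ℝⁿ be continuously differentiable with ‖w'(t)‖ ≤ Ψ, Ψ > 0, and define e(t) = w(t) - u where u = w(t_k) is a fixed held control value. If t_{k+1} = inf{t > t_k : ‖e(t)‖ ≥ ζ‖u‖ + ξ} with ζ ∈ (0,1) and ξ > 0, then t_{k+1} - t_k ≥ ξ/Ψ > 0. -/
/-! The error `w t - w tk` grows at speed at most `Ψ`, while the triggering threshold
`ζ ‖w tk‖ + ξ` is at least `ξ`; so the error needs time at least `ξ / Ψ` to reach it. -/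

theorem norm_sub_le_mul_sub_of_norm_deriv_le {E : Type*} [NormedAddCommGroup E] [NormedSpace ℝ E]
    {f : ℝ → E} {C s t : ℝ} (hf : Differentiable ℝ f) (hC : ∀ x, ‖deriv f x‖ ≤ C) (hst : s ≤ t) :
    ‖f t - f s‖ ≤ C * (t - s) := by
  have h := convex_univ.norm_image_sub_le_of_norm_deriv_le (fun x _ => hf x) (fun x _ => hC x)
    (Set.mem_univ s) (Set.mem_univ t)
  rwa [Real.norm_of_nonneg (sub_nonneg.mpr hst)] at h

theorem div_le_sub_of_threshold_le_norm_sub {E : Type*} [NormedAddCommGroup E]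
    [NormedSpace ℝ E] {w : ℝ → E} {tk t Ψ ζ ξ : ℝ} (hΨ : 0 < Ψ) (hζ : 0 ≤ ζ)
    (hw : Differentiable ℝ w) (hbound : ∀ x, ‖deriv w x‖ ≤ Ψ) (ht : tk < t)
    (hreach : ζ * ‖w tk‖ + ξ ≤ ‖w t - w tk‖) :
    ξ / Ψ ≤ t - tk := by
  have hgrowth := norm_sub_le_mul_sub_of_norm_deriv_le hw hbound ht.le
  have hthreshold : ξ ≤ ζ * ‖w tk‖ + ξ := le_add_of_nonneg_left (by positivity)
  rw [div_le_iff₀ hΨ]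
  linarith

theorem stmt_7_general (n : ℕ) (w : ℝ → EuclideanSpace ℝ (Fin n)) (tk tk1 Ψ ζ ξ : ℝ)
    (hΨ : 0 < Ψ) (hζ : 0 < ζ) (hξ : 0 < ξ)
    (hw : ContDiff ℝ 1 w)
    (hbound : ∀ t, ‖deriv w t‖ ≤ Ψ)
    (htrig : IsLeast {t : ℝ | t > tk ∧ ‖w t - w tk‖ ≥ ζ * ‖w tk‖ + ξ} tk1) :
    tk1 - tk ≥ ξ / Ψ ∧ 0 < ξ / Ψ := by
  obtain ⟨⟨htk1, hreach⟩, -⟩ := htrig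
  exact ⟨div_le_sub_of_threshold_le_norm_sub hΨ hζ.le (hw.differentiable one_ne_zero) hbound
    htk1 hreach, div_pos hξ hΨ⟩

theorem stmt_7 (n : ℕ) (w : ℝ → EuclideanSpace ℝ (Fin n)) (tk tk1 Ψ ζ ξ : ℝ)
    (hΨ : 0 < Ψ) (hζ : 0 < ζ) (hζ1 : ζ < 1) (hξ : 0 < ξ)
    (hw : ContDiff ℝ 1 w)
    (hbound : ∀ t, ‖deriv w t‖ ≤ Ψ)
    (htrig : IsLeast {t : ℝ | t > tk ∧ ‖w t - w tk‖ ≥ ζ * ‖w tk‖ + ξ} tk1) :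
    tk1 - tk ≥ ξ / Ψ ∧ 0 < ξ / Ψ :=
  stmt_7_general n w tk tk1 Ψ ζ ξ hΨ hζ hξ hw hbound htrig
end
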